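/- arXiv:1109.3327 — 2 statements merged into one kernel-verified Lean document; each statement's English description precedes it below -/
import Mathlib

section
/- For the autonomous Lagrangian L_a(x,y,ẋ,ẏ) = (1/2)ẋ² + 1 − cos(2πx) + (1/2)(ẏ−c)² on 𝕋² = ℝ²/ℤ², for every u ∈ C(𝕋²,ℝ), every ỹ ∈ ℝ, and every t > 0, one has T_t u(π(0,ỹ)) ≤ (min_{q ∈ {0}×𝕊¹} u(q)) + 1/(2t). -/
open Set Filter MeasureTheory

noncomputable section

/-- The two-torus `𝕋² = ℝ²/ℤ²`. -/
abbrev T2 : Type := AddCircle (1 : ℝ) × AddCircle (1 : ℝ)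

/-- The quotient map `π : ℝ² → 𝕋²`. -/
def p2 (q : ℝ × ℝ) : T2 := ((q.1 : AddCircle (1 : ℝ)), (q.2 : AddCircle (1 : ℝ)))

/-- `γ` is continuous and piecewise `C¹` on `[a,b]`. -/
def PiecewiseC1On {E : Type*} [NormedAddCommGroup E] [NormedSpace ℝ E]
    (γ : ℝ → E) (a b : ℝ) : Prop :=
  ContinuousOn γ (Set.Icc a b) ∧
  ∃ (N : ℕ) (p : Fin (N + 1) → ℝ), p 0 = a ∧ p (Fin.last N) = b ∧ Monotone p ∧
    ∀ i : Fin N, ContDiffOn ℝ 1 γ (Set.Icc (p i.castSucc) (p i.succ))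

/-- The Lagrangian `L_a(x,y,ẋ,ẏ) = ẋ²/2 + 1 − cos(2πx) + (ẏ−c)²/2`. -/
def La (c : ℝ) (q v : ℝ × ℝ) : ℝ :=
  (1 / 2) * v.1 ^ 2 + 1 - Real.cos (2 * Real.pi * q.1) + (1 / 2) * (v.2 - c) ^ 2

/-- The action of a curve for `L_a` on `[a,b]`. -/
def actionA (c : ℝ) (γ : ℝ → ℝ × ℝ) (a b : ℝ) : ℝ :=
  ∫ s in a..b, La c (γ s) (deriv γ s)

/-- The Lax–Oleinik semigroup `T_t u (q)` for `L_a`. -/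
def Tlo (c t : ℝ) (u : T2 → ℝ) (q : T2) : ℝ :=
  sInf {A : ℝ | ∃ γ : ℝ → ℝ × ℝ, PiecewiseC1On γ 0 t ∧ p2 (γ t) = q ∧
    A = u (p2 (γ 0)) + actionA c γ 0 t}

/-- `F_t(q,q')`: minimal action among curves from `q` to `q'` in time `t`. -/
def Fa (c t : ℝ) (q q' : T2) : ℝ :=
  sInf {A : ℝ | ∃ γ : ℝ → ℝ × ℝ, PiecewiseC1On γ 0 t ∧ p2 (γ 0) = q ∧
    p2 (γ t) = q' ∧ A = actionA c γ 0 t}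

/-- The Peierls barrier `h(q,q') = liminf_{t→+∞} F_t(q,q')`, written as
`sup over T of inf over t ≥ T`. -/
def hA (c : ℝ) (q q' : T2) : ℝ :=
  sSup {r : ℝ | ∃ T : ℝ, r = sInf {A : ℝ | ∃ t : ℝ, 0 < t ∧ T ≤ t ∧ A = Fa c t q q'}}

/-- The circle `{0} × 𝕊¹ ⊆ 𝕋²`. -/
def circ0 : Set T2 := {q : T2 | ∃ yt : ℝ, q = p2 (0, yt)}

/-- The function `u_δ(π(x̃,ỹ)) = max(δ − dist(ỹ − 1/2, ℤ), 0)`. -/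
def udelta (δ : ℝ) (q : T2) : ℝ :=
  max (δ - ‖q.2 - ((1 / 2 : ℝ) : AddCircle (1 : ℝ))‖) 0

/-!
On `{0} × 𝕊¹` the potential `1 − cos 2πx` vanishes, so the vertical segment
`s ↦ (0, y₀ + v s)`, `0 ≤ s ≤ t`, has action `t (v − c)² / 2`. To reach `π(0, ỹ)` from a point
`π(0, y)` of the circle, shift the lift `y` by an integer so that the distance `ỹ − y₀ − c t`
left to cover beyond the free drift `c t` lies in `[0, 1)`; the segment then costs at most
`1 / (2t)`, and the bound follows by taking the infimum over the circle.
-/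

lemma La_nonneg (c : ℝ) (q v : ℝ × ℝ) : 0 ≤ La c q v := by
  unfold La
  nlinarith [Real.cos_le_one (2 * Real.pi * q.1), sq_nonneg v.1, sq_nonneg (v.2 - c)]

lemma actionA_nonneg (c : ℝ) (γ : ℝ → ℝ × ℝ) {a b : ℝ} (hab : a ≤ b) :
    0 ≤ actionA c γ a b :=
  intervalIntegral.integral_nonneg hab fun _ _ => La_nonneg c _ _

lemma Tlo_le_of_piecewiseC1On (c : ℝ) {u : T2 → ℝ} (hu : BddBelow (range u)) {t : ℝ}
    (ht : 0 ≤ t) {γ : ℝ → ℝ × ℝ} (hγ : PiecewiseC1On γ 0 t) :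
    Tlo c t u (p2 (γ t)) ≤ u (p2 (γ 0)) + actionA c γ 0 t := by
  obtain ⟨m, hm⟩ := hu
  refine csInf_le ⟨m, ?_⟩ ⟨γ, hγ, rfl, rfl⟩
  rintro _ ⟨γ', -, -, rfl⟩
  linarith [hm (mem_range_self (p2 (γ' 0))), actionA_nonneg c γ' ht]

lemma ContDiff.piecewiseC1On {E : Type*} [NormedAddCommGroup E] [NormedSpace ℝ E]
    {γ : ℝ → E} (hγ : ContDiff ℝ 1 γ) {a b : ℝ} (hab : a ≤ b) : PiecewiseC1On γ a b :=
  ⟨hγ.continuous.continuousOn, 1, ![a, b], rfl, rfl,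
    Fin.monotone_iff_le_succ.2 fun i => by fin_cases i; exact hab, fun _ => hγ.contDiffOn⟩

def verticalLine (y₀ v s : ℝ) : ℝ × ℝ := (0, y₀ + v * s)

lemma hasDerivAt_verticalLine (y₀ v s : ℝ) : HasDerivAt (verticalLine y₀ v) (0, v) s :=
  (hasDerivAt_const s 0).prodMk (by simpa using ((hasDerivAt_id s).const_mul v).const_add y₀)

lemma contDiff_verticalLine (y₀ v : ℝ) : ContDiff ℝ 1 (verticalLine y₀ v) :=
  contDiff_const.prodMk (contDiff_const.add (contDiff_const.mul contDiff_id))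

lemma actionA_verticalLine (c y₀ v a b : ℝ) :
    actionA c (verticalLine y₀ v) a b = (b - a) * ((v - c) ^ 2 / 2) := by
  have hL : ∀ s, La c (verticalLine y₀ v s) (deriv (verticalLine y₀ v) s) = (v - c) ^ 2 / 2 := by
    intro s
    simp only [(hasDerivAt_verticalLine y₀ v s).deriv, La, verticalLine, mul_zero, Real.cos_zero]
    ring
  simp only [actionA, hL, intervalIntegral.integral_const, smul_eq_mul]

lemma Tlo_le_add_one_div_two_mul (c : ℝ) {u : T2 → ℝ} (hu : BddBelow (range u))
    {t : ℝ} (ht : 0 < t) (ys yt : ℝ) :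
    Tlo c t u (p2 (0, yt)) ≤ u (p2 (0, ys)) + 1 / (2 * t) := by
  set θ := Int.fract (yt - c * t - ys)
  set y₀ := yt - c * t - θ
  set γ := verticalLine y₀ (c + θ / t)
  have hend : γ t = (0, yt) := by
    simp only [γ, verticalLine, y₀]
    congr 1
    field_simp
    ring
  have hstart : p2 (γ 0) = p2 (0, ys) := by
    have hy₀ : y₀ = ys + ⌊yt - c * t - ys⌋ := by
      simp only [y₀, θ]
      linarith [Int.self_sub_fract (yt - c * t - ys)]
    simp [γ, verticalLine, p2, hy₀]
  have haction : actionA c γ 0 t ≤ 1 / (2 * t) := by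
    rw [actionA_verticalLine, sub_zero, add_sub_cancel_left]
    have hθ : θ ^ 2 ≤ 1 := by
      nlinarith [Int.fract_nonneg (yt - c * t - ys), Int.fract_lt_one (yt - c * t - ys)]
    calc t * ((θ / t) ^ 2 / 2) = θ ^ 2 / (2 * t) := by field_simp
      _ ≤ 1 / (2 * t) := by gcongr
  calc Tlo c t u (p2 (0, yt)) = Tlo c t u (p2 (γ t)) := by rw [hend]
    _ ≤ u (p2 (γ 0)) + actionA c γ 0 t :=
      Tlo_le_of_piecewiseC1On c hu ht.le ((contDiff_verticalLine _ _).piecewiseC1On ht.le)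
    _ ≤ u (p2 (0, ys)) + 1 / (2 * t) := by rw [hstart]; linarith

/-- For `L_a` on `𝕋²`, every continuous `u`, every `ỹ ∈ ℝ` and
every `t > 0`, `T_t u (π(0,ỹ)) ≤ min_{{0}×𝕊¹} u + 1/(2t)`. -/
theorem laxOleinik_upper_bound_on_circle (c : ℝ) (u : T2 → ℝ) (hu : Continuous u)
    (yt : ℝ) (t : ℝ) (ht : 0 < t) :
    Tlo c t u (p2 (0, yt)) ≤ sInf (u '' circ0) + 1 / (2 * t) := by
  have hbdd : BddBelow (range u) := (isCompact_range hu).bddBelow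
  rw [← sub_le_iff_le_add]
  refine le_csInf ⟨_, mem_image_of_mem u ⟨0, rfl⟩⟩ ?_
  rintro _ ⟨_, ⟨ys, rfl⟩, rfl⟩
  linarith [Tlo_le_add_one_div_two_mul c hbdd ht ys yt]
end
end

section
/- For the autonomous Lagrangian L_a(x,y,ẋ,ẏ) = (1/2)ẋ² + 1 − cos(2πx) + (1/2)(ẏ−c)² on 𝕋² = ℝ²/ℤ² and the function u_δ with 0 < δ < 1/2: for every t > 0 with dist(ct,ℤ) ≤ δ/2, one has T_t u_δ(π(0,1/2)) ≥ min( δ/4, δ²/(32t) ). -/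
open Set Filter MeasureTheory

noncomputable section

/-!
Only the vertical motion matters: `L_a ≥ (ẏ - c)² / 2`, so by Cauchy–Schwarz a curve whose
`y`-coordinate moves by `Δy` in time `t` has action at least `(Δy - ct)² / (2t)`. A curve ending
at height `1/2` starts at circle distance `d` from `1/2` and pays `δ - d` through `u_δ`; since `ct`
is within `δ/2` of an integer, `|Δy - ct| ≥ d - δ/2`. Either `d ≤ 3δ/4` and `u_δ` alone contributes
`δ/4`, or `|Δy - ct| ≥ δ/4` and the action is at least `δ² / (32t)`.
-/

section PiecewiseC1

variable {E : Type*} [NormedAddCommGroup E] [NormedSpace ℝ E] {γ : ℝ → E} {a b : ℝ}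

theorem ContDiffOn.intervalIntegrable_comp_deriv {F : Type*} [NormedAddCommGroup F]
    (hab : a ≤ b) (hγ : ContDiffOn ℝ 1 γ (Icc a b)) {G : E → E → F}
    (hG : Continuous (Function.uncurry G)) :
    IntervalIntegrable (fun s => G (γ s) (deriv γ s)) volume a b := by
  rcases hab.eq_or_lt with rfl | hlt
  · exact .refl
  have hcont : ContinuousOn (fun s => G (γ s) (derivWithin γ (Icc a b) s)) (uIcc a b) := by
    rw [uIcc_of_le hab]
    exact hG.comp_continuousOn
      (hγ.continuousOn.prodMk (hγ.continuousOn_derivWithin (uniqueDiffOn_Icc hlt) le_rfl))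
  refine hcont.intervalIntegrable.congr_uIoo fun x hx => ?_
  rw [uIoo_of_le hab] at hx
  simp only [derivWithin_of_mem_nhds (Icc_mem_nhds hx.1 hx.2)]

theorem PiecewiseC1On.exists_nat_partition (hγ : PiecewiseC1On γ a b) :
    ∃ (N : ℕ) (q : ℕ → ℝ), q 0 = a ∧ q N = b ∧
      ∀ k < N, q k ≤ q (k + 1) ∧ ContDiffOn ℝ 1 γ (Icc (q k) (q (k + 1))) := by
  obtain ⟨-, N, p, hp0, hpN, hmono, hC1⟩ := hγ
  refine ⟨N, fun k => p ⟨min k N, by omega⟩, ?_, ?_, fun k hk => ⟨hmono ?_, ?_⟩⟩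
  · simpa using hp0
  · simpa [Fin.last] using hpN
  · simp [Fin.le_def]
  · have hk₀ : (⟨min k N, by omega⟩ : Fin (N + 1)) = (⟨k, hk⟩ : Fin N).castSucc :=
      Fin.ext (by simp; omega)
    have hk₁ : (⟨min (k + 1) N, by omega⟩ : Fin (N + 1)) = (⟨k, hk⟩ : Fin N).succ :=
      Fin.ext (by simp; omega)
    simpa only [hk₀, hk₁] using hC1 ⟨k, hk⟩

theorem PiecewiseC1On.intervalIntegrable_comp_deriv {F : Type*} [NormedAddCommGroup F]
    (hγ : PiecewiseC1On γ a b) {G : E → E → F} (hG : Continuous (Function.uncurry G)) :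
    IntervalIntegrable (fun s => G (γ s) (deriv γ s)) volume a b := by
  obtain ⟨N, q, rfl, rfl, hq⟩ := hγ.exists_nat_partition
  exact IntervalIntegrable.trans_iterate fun k hk =>
    (hq k hk).2.intervalIntegrable_comp_deriv (hq k hk).1 hG

theorem PiecewiseC1On.integral_deriv_eq_sub [CompleteSpace E] (hγ : PiecewiseC1On γ a b) :
    ∫ s in a..b, deriv γ s = γ b - γ a := by
  obtain ⟨N, q, rfl, rfl, hq⟩ := hγ.exists_nat_partition
  have hpiece (k : ℕ) (hk : k ∈ Finset.range N) :
      ∫ s in q k..q (k + 1), deriv γ s = γ (q (k + 1)) - γ (q k) := by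
    obtain ⟨hle, hC1⟩ := hq k (Finset.mem_range.1 hk)
    exact intervalIntegral.integral_deriv_of_contDiffOn_Icc hC1 hle
  rw [← intervalIntegral.sum_integral_adjacent_intervals fun k hk =>
    (hq k hk).2.intervalIntegrable_comp_deriv (hq k hk).1 (G := fun _ v => v) continuous_snd,
    Finset.sum_congr rfl hpiece]
  exact Finset.sum_range_sub (γ ∘ q) N

theorem piecewiseC1On_const (x : E) (hab : a ≤ b) : PiecewiseC1On (fun _ => x) a b := by
  refine ⟨continuousOn_const, 1, ![a, b], rfl, rfl, ?_, fun _ => contDiffOn_const⟩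
  exact Fin.monotone_iff_le_succ.2 fun i => by fin_cases i; simpa using hab

end PiecewiseC1

theorem sq_integral_div_le_integral_sq {f : ℝ → ℝ} {a b : ℝ} (hab : a < b)
    (hf : IntervalIntegrable f volume a b)
    (hf2 : IntervalIntegrable (fun s => f s ^ 2) volume a b) :
    (∫ s in a..b, f s) ^ 2 / (b - a) ≤ ∫ s in a..b, f s ^ 2 := by
  set I := ∫ s in a..b, f s
  set m := I / (b - a)
  have hvar : 0 ≤ ∫ s in a..b, (f s ^ 2 - 2 * m * f s + m ^ 2) :=
    intervalIntegral.integral_nonneg hab.le fun s _ => by nlinarith [sq_nonneg (f s - m)]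
  rw [intervalIntegral.integral_add (hf2.sub (hf.const_mul _)) intervalIntegrable_const,
    intervalIntegral.integral_sub hf2 (hf.const_mul _), intervalIntegral.integral_const_mul,
    intervalIntegral.integral_const, smul_eq_mul] at hvar
  change 0 ≤ _ - 2 * m * I + _ at hvar
  have hm : m * (b - a) = I := div_mul_cancel₀ I (sub_pos.2 hab).ne'
  have hI : I ^ 2 / (b - a) = m * I := by rw [← hm]; field_simp
  have hm2 : (b - a) * m ^ 2 = m * I := by rw [← hm]; ring
  linarith

theorem AddCircle.norm_coe_le_abs (p x : ℝ) : ‖(x : AddCircle p)‖ ≤ |x| :=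
  QuotientAddGroup.norm_mk_le_norm

theorem AddCircle.norm_coe_sub_coe_le (p y₀ y₁ s : ℝ) :
    ‖(y₀ : AddCircle p) - y₁‖ ≤ |y₁ - y₀ - s| + ‖(s : AddCircle p)‖ := by
  have : (y₀ : AddCircle p) - y₁ = -(((y₁ - y₀ - s : ℝ) : AddCircle p) + s) := by
    rw [coe_sub, coe_sub]; abel
  rw [this, norm_neg]
  exact (norm_add_le _ _).trans (by gcongr; exact norm_coe_le_abs p _)

theorem half_sq_sub_le_La (c : ℝ) (q v : ℝ × ℝ) : 1 / 2 * (v.2 - c) ^ 2 ≤ La c q v := by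
  have := Real.cos_le_one (2 * Real.pi * q.1)
  unfold La
  nlinarith [sq_nonneg v.1]

theorem continuous_La (c : ℝ) : Continuous (Function.uncurry (La c)) := by
  unfold La
  fun_prop

theorem sq_div_le_actionA {c a b : ℝ} {γ : ℝ → ℝ × ℝ} (hab : a < b)
    (hγ : PiecewiseC1On γ a b) :
    ((γ b).2 - (γ a).2 - c * (b - a)) ^ 2 / (2 * (b - a)) ≤ actionA c γ a b := by
  set f := fun s => (deriv γ s).2 - c
  have hf : IntervalIntegrable f volume a b :=
    hγ.intervalIntegrable_comp_deriv (G := fun _ v => v.2 - c) (by fun_prop)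
  have hf2 : IntervalIntegrable (fun s => f s ^ 2) volume a b :=
    hγ.intervalIntegrable_comp_deriv (G := fun _ v => (v.2 - c) ^ 2) (by fun_prop)
  have hdγ : IntervalIntegrable (deriv γ) volume a b :=
    hγ.intervalIntegrable_comp_deriv (G := fun _ v => v) continuous_snd
  have hint : ∫ s in a..b, f s = (γ b).2 - (γ a).2 - c * (b - a) := by
    have hsnd := (ContinuousLinearMap.snd ℝ ℝ ℝ).intervalIntegral_comp_comm hdγ
    simp only [ContinuousLinearMap.coe_snd', hγ.integral_deriv_eq_sub, Prod.snd_sub] at hsnd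
    have hdγ₂ : IntervalIntegrable (fun s => (deriv γ s).2) volume a b :=
      hγ.intervalIntegrable_comp_deriv (G := fun _ v => v.2) (by fun_prop)
    rw [intervalIntegral.integral_sub hdγ₂ intervalIntegrable_const, hsnd,
      intervalIntegral.integral_const, smul_eq_mul, mul_comm]
  calc _ = 1 / 2 * ((∫ s in a..b, f s) ^ 2 / (b - a)) := by
        rw [hint, mul_comm 2, ← div_div]; ring
    _ ≤ 1 / 2 * ∫ s in a..b, f s ^ 2 := by
        gcongr; exact sq_integral_div_le_integral_sq hab hf hf2
    _ = ∫ s in a..b, 1 / 2 * f s ^ 2 := (intervalIntegral.integral_const_mul _ _).symm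
    _ ≤ actionA c γ a b := intervalIntegral.integral_mono_on hab.le (hf2.const_mul _)
          (hγ.intervalIntegrable_comp_deriv (continuous_La c)) fun s _ => half_sq_sub_le_La _ _ _

theorem le_Tlo {c t m : ℝ} {u : T2 → ℝ} {q : T2} (ht : 0 ≤ t)
    (h : ∀ γ : ℝ → ℝ × ℝ, PiecewiseC1On γ 0 t → p2 (γ t) = q →
      m ≤ u (p2 (γ 0)) + actionA c γ 0 t) :
    m ≤ Tlo c t u q := by
  obtain ⟨x, hx⟩ := QuotientAddGroup.mk_surjective q.1
  obtain ⟨y, hy⟩ := QuotientAddGroup.mk_surjective q.2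
  have hq : p2 (x, y) = q := Prod.ext hx hy
  refine le_csInf ⟨_, fun _ => (x, y), piecewiseC1On_const _ ht, hq, rfl⟩ ?_
  rintro _ ⟨γ, hγ, hend, rfl⟩
  exact h γ hγ hend

theorem laxOleinik_lower_bound_along_sequence_general (c δ t : ℝ)
    (hδ0 : 0 < δ) (ht : 0 < t)
    (hct : ‖((c * t : ℝ) : AddCircle (1 : ℝ))‖ ≤ δ / 2) :
    min (δ / 4) (δ ^ 2 / (32 * t)) ≤ Tlo c t (udelta δ) (p2 (0, 1 / 2)) := by
  refine le_Tlo ht.le fun γ hγ hend => ?_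
  set e := (γ t).2 - (γ 0).2 - c * t
  set d := ‖((γ 0).2 : AddCircle (1 : ℝ)) - ((γ t).2 : AddCircle (1 : ℝ))‖
  have hy : ((γ t).2 : AddCircle (1 : ℝ)) = ((1 / 2 : ℝ) : AddCircle (1 : ℝ)) :=
    congrArg Prod.snd hend
  have hu : δ - d ≤ udelta δ (p2 (γ 0)) := by
    rw [udelta, ← hy]
    exact le_max_left _ _
  have hu₀ : 0 ≤ udelta δ (p2 (γ 0)) := le_max_right _ _
  have hA : e ^ 2 / (2 * t) ≤ actionA c γ 0 t := by
    simpa only [sub_zero] using sq_div_le_actionA ht hγ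
  have hd : d ≤ |e| + δ / 2 := by
    linarith [AddCircle.norm_coe_sub_coe_le 1 (γ 0).2 (γ t).2 (c * t)]
  rcases le_or_gt d (3 * δ / 4) with hnear | hfar
  · have : 0 ≤ e ^ 2 / (2 * t) := by positivity
    linarith [min_le_left (δ / 4) (δ ^ 2 / (32 * t))]
  · have he : (δ / 4) ^ 2 ≤ e ^ 2 := by nlinarith [abs_nonneg e, sq_abs e]
    calc min (δ / 4) (δ ^ 2 / (32 * t)) ≤ δ ^ 2 / (32 * t) := min_le_right _ _
      _ = (δ / 4) ^ 2 / (2 * t) := by ring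
      _ ≤ e ^ 2 / (2 * t) := by gcongr
      _ ≤ _ := by linarith

/-- For `L_a` on `𝕋²` and `u_δ` with `0 < δ < 1/2`: for every
`t > 0` with `dist(ct, ℤ) ≤ δ/2`, one has
`T_t u_δ (π(0,1/2)) ≥ min(δ/4, δ²/(32t))`. -/
theorem laxOleinik_lower_bound_along_sequence (c δ t : ℝ)
    (hδ0 : 0 < δ) (hδ : δ < 1 / 2) (ht : 0 < t)
    (hct : ‖((c * t : ℝ) : AddCircle (1 : ℝ))‖ ≤ δ / 2) :
    min (δ / 4) (δ ^ 2 / (32 * t)) ≤ Tlo c t (udelta δ) (p2 (0, 1 / 2)) :=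
  laxOleinik_lower_bound_along_sequence_general c δ t hδ0 ht hct
end
end
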